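/- Let (G, ω, τ) be a weighted graph where τ is degenerate with degeneracy ordering R: u₁,…,uₙ. Define incentives p(uᵢ) = τ(uᵢ) − ∑_{e ∈ E(uᵢ,R)} ω(e) ≥ 0, where E(uᵢ,R) is the set of edges between uᵢ and {u₁,…,u_{i−1}}. Then p is a target vector for (G, ω, τ) (the incentive activation process activates all of V(G)), and its total size is ∑_v τ(v) − ∑_{e ∈ E(G)} ω(e). -/

import Mathlib

open Finset

variable {V : Type*}

/-- Total weight of edges between `x` and active set `A`. -/
def Influence [Fintype V] [DecidableEq V] (G : SimpleGraph V) [DecidableRel G.Adj]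
    (ω : Sym2 V → ℚ) (A : Finset V) (x : V) : ℚ :=
  ∑ y ∈ A.filter (G.Adj x), ω s(x, y)

/-- Weighted activation process started from `A₀`. -/
def ActiveW [Fintype V] [DecidableEq V] (G : SimpleGraph V) [DecidableRel G.Adj]
    (ω : Sym2 V → ℚ) (τ : V → ℚ) (A₀ : Finset V) : ℕ → Finset V
  | 0 => A₀
  | t + 1 => ActiveW G ω τ A₀ t ∪
      Finset.univ.filter (fun x => τ x ≤ Influence G ω (ActiveW G ω τ A₀ t) x)

/-- `A₀` is a target set (dynamic monopoly): every vertex eventually activates. -/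
def IsTargetSetW [Fintype V] [DecidableEq V] (G : SimpleGraph V) [DecidableRel G.Adj]
    (ω : Sym2 V → ℚ) (τ : V → ℚ) (A₀ : Finset V) : Prop :=
  ∀ v : V, ∃ t, v ∈ ActiveW G ω τ A₀ t

/-- Incentive activation process for incentive assignment `p`. -/
def ActiveP [Fintype V] [DecidableEq V] (G : SimpleGraph V) [DecidableRel G.Adj]
    (ω : Sym2 V → ℚ) (τ : V → ℚ) (p : V → ℚ) : ℕ → Finset V
  | 0 => Finset.univ.filter (fun v => τ v ≤ p v)
  | t + 1 => ActiveP G ω τ p t ∪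
      Finset.univ.filter (fun x => τ x ≤ Influence G ω (ActiveP G ω τ p t) x + p x)

/-- `p` is a target vector: its incentive process activates every vertex. -/
def IsTargetVector [Fintype V] [DecidableEq V] (G : SimpleGraph V) [DecidableRel G.Adj]
    (ω : Sym2 V → ℚ) (τ : V → ℚ) (p : V → ℚ) : Prop :=
  ∀ v : V, ∃ t, v ∈ ActiveP G ω τ p t

/-- `τ` is a degenerate threshold assignment: every nonempty induced subgraph
(given by its vertex set `S`) has a vertex whose threshold is at least the total
weight of the edges of the induced subgraph incident to it. -/
def DegenerateW [Fintype V] [DecidableEq V] (G : SimpleGraph V) [DecidableRel G.Adj]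
    (ω : Sym2 V → ℚ) (τ : V → ℚ) : Prop :=
  ∀ S : Finset V, S.Nonempty → ∃ x ∈ S, Influence G ω S x ≤ τ x

/-- `u` is a degeneracy ordering: each vertex's threshold is at least the total
weight of edges to earlier vertices. -/
def IsDegOrder [Fintype V] [DecidableEq V] (G : SimpleGraph V) [DecidableRel G.Adj]
    (ω : Sym2 V → ℚ) (τ : V → ℚ) (u : Fin (Fintype.card V) ≃ V) : Prop :=
  ∀ i, (∑ j ∈ Finset.univ.filter (fun j => j < i ∧ G.Adj (u i) (u j)), ω s(u i, u j)) ≤ τ (u i)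

/-- Unweighted activation process. -/
def ActiveU [Fintype V] [DecidableEq V] (G : SimpleGraph V) [DecidableRel G.Adj]
    (τ : V → ℕ) (A₀ : Finset V) : ℕ → Finset V
  | 0 => A₀
  | t + 1 => ActiveU G τ A₀ t ∪
      Finset.univ.filter (fun x => τ x ≤ ((ActiveU G τ A₀ t).filter (G.Adj x)).card)

def IsTargetSetU [Fintype V] [DecidableEq V] (G : SimpleGraph V) [DecidableRel G.Adj]
    (τ : V → ℕ) (A₀ : Finset V) : Prop :=
  ∀ v : V, ∃ t, v ∈ ActiveU G τ A₀ t

/-!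
Activate the vertices along the ordering. By induction on the position, every vertex before
`u i` is active by round `i`, so `u i` then receives at least the weight of its edges to
earlier vertices, and its incentive supplies exactly the rest of `τ (u i)`; nonnegative
weights make the influence monotone in the active set. Summing the incentives counts every
edge once, at its later endpoint.
-/

section Activation

variable [Fintype V] [DecidableEq V] {G : SimpleGraph V} [DecidableRel G.Adj]
  {ω : Sym2 V → ℚ} {τ p : V → ℚ}

theorem influence_mono (hω : ∀ e ∈ G.edgeSet, 0 ≤ ω e) {A B : Finset V} (hAB : A ⊆ B)
    (x : V) : Influence G ω A x ≤ Influence G ω B x :=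
  sum_le_sum_of_subset_of_nonneg (filter_subset_filter _ hAB) fun _ hy _ =>
    hω _ (mem_filter.1 hy).2

theorem monotone_activeP : Monotone (ActiveP G ω τ p) :=
  monotone_nat_of_le_succ fun _ => subset_union_left

theorem mem_activeP_succ {t : ℕ} {x : V}
    (hx : τ x ≤ Influence G ω (ActiveP G ω τ p t) x + p x) : x ∈ ActiveP G ω τ p (t + 1) :=
  mem_union_right _ (mem_filter.2 ⟨mem_univ _, hx⟩)

theorem mem_activeP_rank_succ (hω : ∀ e ∈ G.edgeSet, 0 ≤ ω e) (r : V → ℕ)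
    (hp : ∀ v, τ v ≤ Influence G ω (univ.filter fun w => r w < r v) v + p v) (v : V) :
    v ∈ ActiveP G ω τ p (r v + 1) := by
  induction hk : r v using Nat.strong_induction_on generalizing v with
  | _ k ih =>
    subst hk
    have lower_active : univ.filter (fun w => r w < r v) ⊆ ActiveP G ω τ p (r v) := by
      intro w hw
      have hwv : r w < r v := (mem_filter.1 hw).2
      exact monotone_activeP hwv (ih (r w) hwv w rfl)
    exact mem_activeP_succ ((hp v).trans (by gcongr; exact influence_mono hω lower_active v))

/-- Each edge is counted once, at its endpoint of larger rank. -/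
theorem sum_influence_lower_eq_sum_edgeFinset {α : Type*} [LinearOrder α] {r : V → α}
    (hr : Function.Injective r) :
    ∑ v, Influence G ω (univ.filter fun w => r w < r v) v = ∑ e ∈ G.edgeFinset, ω e := by
  have as_pairs : ∑ v, Influence G ω (univ.filter fun w => r w < r v) v =
      ∑ d ∈ univ.filter (fun d : V × V => r d.2 < r d.1 ∧ G.Adj d.1 d.2), ω s(d.1, d.2) := by
    simp only [Influence, filter_filter, sum_filter, Fintype.sum_prod_type]
  rw [as_pairs]
  refine sum_bij (fun d _ => s(d.1, d.2)) (fun d hd => ?_) (fun d hd d' hd' hdd' => ?_)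
    (fun e he => ?_) fun _ _ => rfl
  · exact G.mem_edgeFinset.2 (mem_filter.1 hd).2.2
  · have hlt := (mem_filter.1 hd).2.1
    have hlt' := (mem_filter.1 hd').2.1
    rcases Sym2.eq_iff.1 hdd' with ⟨h1, h2⟩ | ⟨h1, h2⟩
    · exact Prod.ext h1 h2
    · rw [h1, h2] at hlt
      exact absurd hlt' (lt_asymm hlt)
  · induction e with
    | _ a b =>
      have hab : G.Adj a b := G.mem_edgeFinset.1 he
      rcases lt_or_gt_of_ne (hr.ne hab.ne) with h | h
      · exact ⟨(b, a), by simpa using ⟨h, hab.symm⟩, Sym2.eq_swap⟩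
      · exact ⟨(a, b), by simpa using ⟨h, hab⟩, rfl⟩

theorem sum_lt_symm_eq_influence {n : ℕ} (u : Fin n ≃ V) (v : V) :
    ∑ j ∈ univ.filter (fun j => j < u.symm v ∧ G.Adj v (u j)), ω s(v, u j) =
      Influence G ω (univ.filter fun w => (u.symm w : ℕ) < u.symm v) v :=
  sum_equiv u (fun j => by simp) fun _ _ => rfl

end Activation

theorem deg_order_target_vector_general [Fintype V] [DecidableEq V] (G : SimpleGraph V)
    [DecidableRel G.Adj] (ω : Sym2 V → ℚ) (τ : V → ℚ)
    (hω : ∀ e ∈ G.edgeSet, 0 ≤ ω e)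
    (u : Fin (Fintype.card V) ≃ V) :
    IsTargetVector G ω τ (fun v => τ v -
      ∑ j ∈ Finset.univ.filter (fun j => j < u.symm v ∧ G.Adj v (u j)), ω s(v, u j)) ∧
    (∑ v : V, (τ v -
      ∑ j ∈ Finset.univ.filter (fun j => j < u.symm v ∧ G.Adj v (u j)), ω s(v, u j)))
      = ∑ v : V, τ v - ∑ e ∈ G.edgeFinset, ω e := by
  simp only [sum_lt_symm_eq_influence]
  refine ⟨fun v => ⟨_, mem_activeP_rank_succ hω (fun w => (u.symm w : ℕ)) (fun w => ?_) v⟩, ?_⟩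
  · linarith
  · rw [sum_sub_distrib,
      sum_influence_lower_eq_sum_edgeFinset (r := fun w => (u.symm w : ℕ))
        (Fin.val_injective.comp u.symm.injective)]

/-- the incentive assignment `p(uᵢ) = τ(uᵢ) − (weight to earlier
vertices)` is a target vector of total size `∑ τ − ∑ ω`. -/
theorem deg_order_target_vector [Fintype V] [DecidableEq V] (G : SimpleGraph V)
    [DecidableRel G.Adj] (ω : Sym2 V → ℚ) (τ : V → ℚ)
    (hω : ∀ e ∈ G.edgeSet, 0 ≤ ω e)
    (u : Fin (Fintype.card V) ≃ V) (hu : IsDegOrder G ω τ u) :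
    IsTargetVector G ω τ (fun v => τ v -
      ∑ j ∈ Finset.univ.filter (fun j => j < u.symm v ∧ G.Adj v (u j)), ω s(v, u j)) ∧
    (∑ v : V, (τ v -
      ∑ j ∈ Finset.univ.filter (fun j => j < u.symm v ∧ G.Adj v (u j)), ω s(v, u j)))
      = ∑ v : V, τ v - ∑ e ∈ G.edgeFinset, ω e :=
  deg_order_target_vector_general G ω τ hω u
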